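/- arXiv:1809.07103 — 5 statements merged into one kernel-verified Lean document; each statement's English description precedes it below -/
import Mathlib

section
/- Let (β_{ν,j}) be real numbers for j ∈ ℕ and ν ∈ ℕ₀ with β_{0,j} = 1 for every j. Let 𝐍 be the set of sequences 𝛎 = (ν_j)_{j∈ℕ} in ℕ₀ with ∑_j ν_j < ∞ (equivalently, finite support), and for 𝛎 ∈ 𝐍 set β_𝛎 := ∏_{j∈ℕ} β_{ν_j,j} (a finite product since all but finitely many factors equal 1). Then ∑_{𝛎∈𝐍} β_𝛎 converges absolutely if and only if ∑_{j∈ℕ} ∑_{ν∈ℕ, ν≥1} |β_{ν,j}| < ∞, and in that case ∑_{𝛎∈𝐍} β_𝛎 = ∏_{j∈ℕ} (1 + ∑_{ν≥1} β_{ν,j}). -/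
/-!
For a finite set `s` of indices, multi-indices supported in `s` are tuples `(ν_j)_{j ∈ s}`, so
(Cauchy product, by induction on `s`) the sum of `β_𝛎` over them is `∏_{j ∈ s} ∑_ν β_{ν,j}`.
Since `β_{0,j} = 1`, for `|β|` this finite product is `∏_{j ∈ s} (1 + a_j) ≤ exp (∑_j a_j)` with
`a_j = ∑_{ν ≥ 1} |β_{ν,j}|`, which bounds every finite partial sum of `|β_𝛎|`; conversely the
multi-indices `ν e_j` alone carry all the `|β_{ν,j}|`. Finally, by dominated convergence the sums
over multi-indices supported in `s` tend to the full sum as `s` grows, and this is precisely the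
convergence of the infinite product.
-/

open Finset Filter Topology

theorem Summable.of_prod_succ {ι E : Type*} [NormedAddCommGroup E] [CompleteSpace E]
    {f : ι → ℕ → E} (h : Summable fun p : ι × ℕ => f p.1 (p.2 + 1)) (j : ι) :
    Summable (f j) :=
  (summable_nat_add_iff 1).mp (h.comp_injective (Prod.mk_right_injective j))

namespace Finsupp

variable {ι M : Type*}

theorem prod_single_add_of_notMem_support [AddCommMonoid M] {N : Type*} [CommMonoid N]
    {g : ι → M → N} {j : ι} (hg : g j 0 = 1) (n : M) {ν : ι →₀ M} (hj : j ∉ ν.support) :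
    (single j n + ν).prod g = g j n * ν.prod g := by
  rw [prod_add_index_of_disjoint, prod_single_index hg]
  exact disjoint_of_subset_left support_single_subset (disjoint_singleton_left.mpr hj)

noncomputable def supportSubsetInsertEquiv [AddZeroClass M] [DecidableEq ι] {j : ι}
    {s : Finset ι} (hj : j ∉ s) :
    M × {ν : ι →₀ M // ν.support ⊆ s} ≃ {ν : ι →₀ M // ν.support ⊆ insert j s} where
  toFun p := ⟨single j p.1 + p.2, support_add.trans <| union_subset
    (support_single_subset.trans (by simp)) (p.2.2.trans (subset_insert _ _))⟩
  invFun ν := (ν.1 j, ⟨ν.1.erase j, by rw [support_erase]; exact subset_insert_iff.mp ν.2⟩)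
  left_inv := by
    rintro ⟨n, ν, hν⟩
    have hjν : j ∉ ν.support := fun h => hj (hν h)
    ext1
    · simp [notMem_support_iff.mp hjν]
    · ext1
      simp [erase_add, erase_of_notMem_support hjν]
  right_inv ν := Subtype.ext (single_add_erase j ν.1)

variable {R : Type*} [NormedCommRing R]

theorem summable_norm_and_hasSum_prod_of_support_subset [AddCommMonoid M] [CompleteSpace R]
    {g : ι → M → R} (hg0 : ∀ j, g j 0 = 1) (hg : ∀ j, Summable fun n => ‖g j n‖)
    (s : Finset ι) :
    (Summable fun ν : {ν : ι →₀ M // ν.support ⊆ s} => ‖ν.1.prod g‖) ∧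
      HasSum (fun ν : {ν : ι →₀ M // ν.support ⊆ s} => ν.1.prod g) (∏ j ∈ s, ∑' n, g j n) := by
  classical
  induction s using Finset.induction_on with
  | empty =>
    have hzero : ∀ ν : {ν : ι →₀ M // ν.support ⊆ ∅}, ν = ⟨0, by simp⟩ := fun ν =>
      Subtype.ext (support_eq_empty.mp (subset_empty.mp ν.2))
    refine ⟨(hasSum_single ⟨0, by simp⟩ fun ν hν => (hν (hzero ν)).elim).summable, ?_⟩
    simpa using hasSum_single (f := fun ν : {ν : ι →₀ M // ν.support ⊆ ∅} => ν.1.prod g)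
      ⟨0, by simp⟩ fun ν hν => (hν (hzero ν)).elim
  | @insert j s hj ih =>
    set e := supportSubsetInsertEquiv (M := M) hj
    have he (p) : (e p).1.prod g = g j p.1 * p.2.1.prod g :=
      prod_single_add_of_notMem_support (hg0 j) _ fun h => hj (p.2.2 h)
    have he' : (fun ν : {ν : ι →₀ M // ν.support ⊆ insert j s} => ν.1.prod g) ∘ e =
        fun p => g j p.1 * p.2.1.prod g := funext he
    refine ⟨?_, ?_⟩
    · rw [← e.summable_iff]
      refine ((hg j).mul_of_nonneg ih.1 (fun _ => norm_nonneg _) fun _ => norm_nonneg _)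
        |>.of_nonneg_of_le (fun _ => norm_nonneg _) fun p => ?_
      rw [Function.comp_apply, he]
      exact norm_mul_le _ _
    · rw [← e.hasSum_iff, he', prod_insert hj]
      have hcol : HasSum (g j) (∑' n, g j n) := (hg j).of_norm.hasSum
      have hmul := summable_mul_of_summable_norm (hg j) ih.1
      exact (hcol.mul ih.2 hmul :)

theorem summable_norm_of_summable_norm_prod {g : ι → ℕ → R} (hg0 : ∀ j, g j 0 = 1)
    (h : Summable fun ν : ι →₀ ℕ => ‖ν.prod g‖) :
    Summable fun p : ι × ℕ => ‖g p.1 (p.2 + 1)‖ := by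
  have hinj : Function.Injective fun p : ι × ℕ => single p.1 (p.2 + 1) := by
    rintro ⟨i, m⟩ ⟨j, n⟩ hij
    obtain ⟨rfl, hmn⟩ | ⟨hm, -⟩ := (single_eq_single_iff _ _ _ _).mp hij
    · exact congrArg (Prod.mk i) (Nat.succ_injective hmn)
    · exact absurd hm m.succ_ne_zero
  exact (h.comp_injective hinj).congr fun p => by
    rw [Function.comp_apply, prod_single_index (hg0 p.1)]

theorem summable_prod_of_nonneg {g : ι → ℕ → ℝ} (hg0 : ∀ j, g j 0 = 1) (hg : ∀ j n, 0 ≤ g j n)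
    (h : Summable fun p : ι × ℕ => g p.1 (p.2 + 1)) :
    Summable fun ν : ι →₀ ℕ => ν.prod g := by
  classical
  have hcol := h.of_prod_succ
  have hprod_nonneg (ν : ι →₀ ℕ) : 0 ≤ ν.prod g := prod_nonneg fun j _ => hg j _
  refine summable_of_sum_le (c := Real.exp (∑' p : ι × ℕ, g p.1 (p.2 + 1))) hprod_nonneg
    fun u => ?_
  set s := u.sup support
  have hsupp (ν) (hν : ν ∈ u) : ν.support ⊆ s := le_sup hν
  have hs := (summable_norm_and_hasSum_prod_of_support_subset hg0 (fun j => (hcol j).norm) s).2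
  calc ∑ ν ∈ u, ν.prod g = ∑ ν ∈ u.subtype (·.support ⊆ s), ν.1.prod g :=
        (sum_subtype_of_mem _ hsupp).symm
    _ ≤ ∑' ν : {ν : ι →₀ ℕ // ν.support ⊆ s}, ν.1.prod g :=
        hs.summable.sum_le_tsum _ fun ν _ => hprod_nonneg ν
    _ = ∏ j ∈ s, (1 + ∑' n, g j (n + 1)) := by
        rw [hs.tsum_eq]
        exact Finset.prod_congr rfl fun j _ => by rw [(hcol j).tsum_eq_zero_add, hg0]
    _ ≤ ∏ j ∈ s, Real.exp (∑' n, g j (n + 1)) :=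
        prod_le_prod (fun j _ => add_nonneg zero_le_one (tsum_nonneg fun n => hg j _))
          fun j _ => by linarith [Real.add_one_le_exp (∑' n, g j (n + 1))]
    _ = Real.exp (∑ j ∈ s, ∑' n, g j (n + 1)) := (Real.exp_sum _ _).symm
    _ ≤ Real.exp (∑' p : ι × ℕ, g p.1 (p.2 + 1)) := by
        rw [Real.exp_le_exp, h.tsum_prod' fun j => (hcol j).comp_injective (add_left_injective 1)]
        exact h.prod.sum_le_tsum s fun j _ => tsum_nonneg fun n => hg j _

theorem summable_norm_prod_iff [NormOneClass R] {g : ι → ℕ → R} (hg0 : ∀ j, g j 0 = 1) :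
    (Summable fun ν : ι →₀ ℕ => ‖ν.prod g‖) ↔ Summable fun p : ι × ℕ => ‖g p.1 (p.2 + 1)‖ := by
  refine ⟨summable_norm_of_summable_norm_prod hg0, fun h => ?_⟩
  refine (summable_prod_of_nonneg (g := fun j n => ‖g j n‖) (by simp [hg0])
    (fun _ _ => norm_nonneg _) h).of_nonneg_of_le (fun _ => norm_nonneg _) fun ν => ?_
  exact norm_prod_le _ _

theorem hasProd_tsum_of_summable_norm_prod [CompleteSpace R] {g : ι → ℕ → R}
    (hg0 : ∀ j, g j 0 = 1) (h : Summable fun ν : ι →₀ ℕ => ‖ν.prod g‖) :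
    HasProd (fun j => ∑' n, g j n) (∑' ν : ι →₀ ℕ, ν.prod g) := by
  have hcol := (summable_norm_of_summable_norm_prod hg0 h).of_prod_succ (f := fun j n => ‖g j n‖)
  have hlim : Tendsto (fun s : Finset ι => ∑' ν, {ν : ι →₀ ℕ | ν.support ⊆ s}.indicator
      (·.prod g) ν) atTop (𝓝 (∑' ν : ι →₀ ℕ, ν.prod g)) :=
    tendsto_tsum_of_dominated_convergence h
      (fun ν => tendsto_const_nhds.congr' <| (eventually_ge_atTop ν.support).mono
        fun s hs => (Set.indicator_of_mem hs _).symm)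
      (Eventually.of_forall fun s ν => norm_indicator_le_norm_self _ _)
  refine hlim.congr fun s => ?_
  rw [← _root_.tsum_subtype]
  exact (summable_norm_and_hasSum_prod_of_support_subset hg0 hcol s).2.tsum_eq

end Finsupp

/-- For reals `β_{ν,j}` (`ν ∈ ℕ₀`, `j ∈ ℕ`) with `β_{0,j} = 1`, and
`β_𝛎 := ∏_j β_{ν_j, j}` for finitely supported `𝛎 : ℕ → ℕ₀`, the family `(β_𝛎)` is
absolutely summable iff `∑_j ∑_{ν ≥ 1} |β_{ν,j}| < ∞`, in which case
`∑_𝛎 β_𝛎 = ∏_j (1 + ∑_{ν ≥ 1} β_{ν,j})`. -/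
theorem stmt3 (β : ℕ → ℕ → ℝ) (hβ0 : ∀ j, β 0 j = 1) :
    ((Summable fun ν : ℕ →₀ ℕ => |∏ j ∈ ν.support, β (ν j) j|) ↔
      Summable fun p : ℕ × ℕ => |β (p.2 + 1) p.1|) ∧
    ((Summable fun ν : ℕ →₀ ℕ => |∏ j ∈ ν.support, β (ν j) j|) →
      ∑' ν : ℕ →₀ ℕ, ∏ j ∈ ν.support, β (ν j) j =
        ∏' j : ℕ, (1 + ∑' ν : ℕ, β (ν + 1) j)) := by
  have hiff := Finsupp.summable_norm_prod_iff (g := fun j n => β n j) hβ0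
  refine ⟨hiff, fun h => ?_⟩
  have hcol := (hiff.mp h).of_prod_succ (f := fun j n => ‖β n j‖)
  have hprod := Finsupp.hasProd_tsum_of_summable_norm_prod (g := fun j n => β n j) hβ0 h
  refine hprod.tprod_eq.symm.trans (tprod_congr fun j => ?_)
  rw [(hcol j).of_norm.tsum_eq_zero_add, hβ0]
end

section
/- Let (α_{ν,j})_{ν,j∈ℕ} be a family of positive reals satisfying: (C1) α_{ν,j} ≥ max(α_{ν,1}, α_{1,j}) for all ν, j; (C2) α_{1,1} > 1; and (C3) liminf_{ν,j→∞} ln(α_{ν,j})/(ln(ν)·ln(j)) > 0 (i.e., there exist ε > 0 and n ∈ ℕ with ln(α_{ν,j}) ≥ ε·ln(ν)·ln(j) for all ν, j ≥ n). Then for every τ > 0 and σ ≥ 0: ∑_{ν,j∈ℕ} α_{ν,j}^{-τ}·ν^σ < ∞ if and only if both ∑_{ν∈ℕ} α_{ν,1}^{-τ}·ν^σ < ∞ and ∑_{j∈ℕ} α_{1,j}^{-τ} < ∞. -/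
/-!
Restricting the double family to the row `j = 1` and to the column `ν = 1` gives necessity.
Conversely, (C3) gives `α_{ν,j}^{-τ} ν^σ ≤ ν^{-2} j^{-2}` once `ν, j ≥ N` for a large `N`, since
`τ ε ln ν ln j` eventually beats any linear form in `ln ν, ln j`. On the finitely many rows `ν < N`
the term is at most `ν^σ α_{1,j}^{-τ}`, and on the finitely many columns `j < N` at most
`α_{ν,1}^{-τ} ν^σ`, by (C1).
-/

open Filter Real

section RowsColumns

variable {α β γ : Type*} [AddCommMonoid α] [TopologicalSpace α] [ContinuousAdd α]

theorem summable_indicator_fst_mem {f : β × γ → α} (s : Finset β)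
    (hrow : ∀ x ∈ s, Summable fun y => f (x, y)) :
    Summable ({p : β × γ | p.1 ∈ s}.indicator f) := by
  classical
  have hsum : {p : β × γ | p.1 ∈ s}.indicator f =
      fun p => ∑ x ∈ s, if p.1 = x then f p else 0 := by
    ext p; simp [Set.indicator_apply]
  rw [hsum]
  refine summable_sum fun x hx => ?_
  rw [← (Prod.mk_right_injective x).summable_iff]
  · simpa [Function.comp_def] using hrow x hx
  · rintro ⟨x', y⟩ hp
    have : x' ≠ x := fun h => hp ⟨y, by rw [h]⟩
    simp [this]

theorem summable_indicator_snd_mem {f : β × γ → α} (t : Finset γ)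
    (hcol : ∀ y ∈ t, Summable fun x => f (x, y)) :
    Summable ({p : β × γ | p.2 ∈ t}.indicator f) :=
  (summable_indicator_fst_mem (f := f ∘ Prod.swap) t hcol).prod_symm

end RowsColumns

theorem summable_of_summable_rows_of_summable_cols {β γ : Type*} {f : β × γ → ℝ}
    (hf : ∀ p, 0 ≤ f p) (s : Finset β) (t : Finset γ)
    (hrow : ∀ x ∈ s, Summable fun y => f (x, y)) (hcol : ∀ y ∈ t, Summable fun x => f (x, y))
    (hrest : Summable ({p : β × γ | p.1 ∉ s ∧ p.2 ∉ t}.indicator f)) : Summable f := by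
  refine .of_nonneg_of_le hf (fun p => ?_)
    (((summable_indicator_fst_mem s hrow).add (summable_indicator_snd_mem t hcol)).add hrest)
  classical
  simp only [Set.indicator_apply, Set.mem_ofPred_eq]
  split_ifs <;> grind [hf p]

theorem exists_pnat_le_and_le_log (n : ℕ+) (C : ℝ) :
    ∃ N : ℕ+, n ≤ N ∧ C ≤ log ((N : ℕ) : ℝ) := by
  have hlog : Tendsto (fun N : ℕ+ => log ((N : ℕ) : ℝ)) atTop atTop :=
    tendsto_log_atTop.comp (tendsto_natCast_atTop_atTop.comp tendsto_PNat_val_atTop_atTop)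
  exact ((eventually_ge_atTop n).and (hlog.eventually_ge_atTop C)).exists

theorem rpow_neg_mul_rpow_le_of_log {a x y τ σ p : ℝ} (ha : 0 < a) (hx : 0 < x) (hy : 0 < y)
    (h : (σ + p) * log x + p * log y ≤ τ * log a) :
    a ^ (-τ) * x ^ σ ≤ x ^ (-p) * y ^ (-p) := by
  rw [rpow_def_of_pos ha, rpow_def_of_pos hx, rpow_def_of_pos hx, rpow_def_of_pos hy,
    ← exp_add, ← exp_add, exp_le_exp]
  linarith

theorem add_mul_add_le_mul_mul {a b c L x y : ℝ} (hL : 2 * (|a| + |b|) ≤ c * L) (hc : 0 ≤ c)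
    (hL0 : 0 ≤ L) (hx : L ≤ x) (hy : L ≤ y) :
    a * x + b * y ≤ c * (x * y) := by
  have hx0 : 0 ≤ x := hL0.trans hx
  have hy0 : 0 ≤ y := hL0.trans hy
  have hax : a * x + b * y ≤ (|a| + |b|) * x + (|a| + |b|) * y := by
    nlinarith [abs_nonneg a, abs_nonneg b, le_abs_self a, le_abs_self b]
  have hcx : 2 * (|a| + |b|) * x ≤ c * y * x :=
    mul_le_mul_of_nonneg_right (hL.trans (mul_le_mul_of_nonneg_left hy hc)) hx0
  have hcy : 2 * (|a| + |b|) * y ≤ c * x * y :=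
    mul_le_mul_of_nonneg_right (hL.trans (mul_le_mul_of_nonneg_left hx hc)) hy0
  nlinarith

theorem summable_pnat_rpow_neg {p : ℝ} (hp : 1 < p) :
    Summable fun n : ℕ+ => ((n : ℕ) : ℝ) ^ (-p) :=
  (summable_nat_rpow.2 (by linarith)).comp_injective PNat.coe_injective

theorem exists_rpow_neg_mul_rpow_le (α : ℕ+ → ℕ+ → ℝ) (hpos : ∀ ν j, 0 < α ν j)
    (hC3 : ∃ ε > (0 : ℝ), ∃ n : ℕ+, ∀ ν j : ℕ+, n ≤ ν → n ≤ j →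
      ε * (Real.log ((ν : ℕ) : ℝ) * Real.log ((j : ℕ) : ℝ)) ≤ Real.log (α ν j))
    {τ : ℝ} (hτ : 0 < τ) (σ p : ℝ) :
    ∃ N : ℕ+, ∀ ν j : ℕ+, N ≤ ν → N ≤ j →
      α ν j ^ (-τ) * ((ν : ℕ) : ℝ) ^ σ ≤ ((ν : ℕ) : ℝ) ^ (-p) * ((j : ℕ) : ℝ) ^ (-p) := by
  obtain ⟨ε, hε, n, hn⟩ := hC3
  obtain ⟨N, hnN, hN⟩ := exists_pnat_le_and_le_log n (2 * (|σ + p| + |p|) / (τ * ε))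
  have hlog_mono {m : ℕ+} (hm : N ≤ m) : log ((N : ℕ) : ℝ) ≤ log ((m : ℕ) : ℝ) :=
    log_le_log (by positivity) (by exact_mod_cast hm)
  refine ⟨N, fun ν j hν hj => rpow_neg_mul_rpow_le_of_log (hpos ν j) (by positivity)
    (by positivity) ?_⟩
  calc (σ + p) * log ((ν : ℕ) : ℝ) + p * log ((j : ℕ) : ℝ)
      ≤ τ * ε * (log ((ν : ℕ) : ℝ) * log ((j : ℕ) : ℝ)) :=
        add_mul_add_le_mul_mul ((div_le_iff₀' (by positivity)).1 hN) (by positivity)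
          (log_natCast_nonneg _) (hlog_mono hν) (hlog_mono hj)
    _ ≤ τ * log (α ν j) := by
        rw [mul_assoc]
        exact mul_le_mul_of_nonneg_left (hn ν j (hnN.trans hν) (hnN.trans hj)) hτ.le

theorem stmt5_general (α : ℕ+ → ℕ+ → ℝ) (hpos : ∀ ν j, 0 < α ν j)
    (hC1 : ∀ ν j, max (α ν 1) (α 1 j) ≤ α ν j)
    (hC3 : ∃ ε > (0 : ℝ), ∃ n : ℕ+, ∀ ν j : ℕ+, n ≤ ν → n ≤ j →
      ε * (Real.log ((ν : ℕ) : ℝ) * Real.log ((j : ℕ) : ℝ)) ≤ Real.log (α ν j))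
    (τ σ : ℝ) (hτ : 0 < τ) :
    (Summable fun p : ℕ+ × ℕ+ => α p.1 p.2 ^ (-τ) * ((p.1 : ℕ) : ℝ) ^ σ) ↔
      ((Summable fun ν : ℕ+ => α ν 1 ^ (-τ) * ((ν : ℕ) : ℝ) ^ σ) ∧
        Summable fun j : ℕ+ => α 1 j ^ (-τ)) := by
  refine ⟨fun h => ⟨h.prod_symm.prod_factor 1, by simpa using h.prod_factor 1⟩, ?_⟩
  rintro ⟨hcol, hrow⟩
  have hanti {ν j ν' j'} (h : α ν' j' ≤ α ν j) : α ν j ^ (-τ) ≤ α ν' j' ^ (-τ) :=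
    rpow_le_rpow_of_nonpos (hpos ν' j') h (by linarith)
  have hnonneg (ν j : ℕ+) : 0 ≤ α ν j ^ (-τ) * ((ν : ℕ) : ℝ) ^ σ :=
    mul_nonneg (rpow_nonneg (hpos ν j).le _) (by positivity)
  obtain ⟨N, hN⟩ := exists_rpow_neg_mul_rpow_le α hpos hC3 hτ σ 2
  have hdom := (summable_pnat_rpow_neg one_lt_two).mul_of_nonneg
    (summable_pnat_rpow_neg one_lt_two) (fun _ => by positivity) (fun _ => by positivity)
  refine summable_of_summable_rows_of_summable_cols (fun p => hnonneg p.1 p.2)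
    (Finset.Iio N) (Finset.Iio N) (fun ν _ => ?_) (fun j _ => ?_) ?_
  · refine (hrow.mul_right (((ν : ℕ) : ℝ) ^ σ)).of_nonneg_of_le (hnonneg ν) fun j => ?_
    exact mul_le_mul_of_nonneg_right (hanti ((le_max_right _ _).trans (hC1 ν j))) (by positivity)
  · exact hcol.of_nonneg_of_le (hnonneg · j) fun ν =>
      mul_le_mul_of_nonneg_right (hanti ((le_max_left _ _).trans (hC1 ν j))) (by positivity)
  · refine hdom.of_nonneg_of_le (Set.indicator_nonneg fun p _ => hnonneg p.1 p.2)
      (Set.indicator_le' (fun p hp => hN p.1 p.2 (by simpa using hp.1) (by simpa using hp.2))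
        fun _ _ => by positivity)

/-- Under (C1) `α_{ν,j} ≥ max(α_{ν,1}, α_{1,j})`, (C2) `α_{1,1} > 1`, and
(C3) `liminf ln(α_{ν,j})/(ln ν · ln j) > 0`, for all `τ > 0`, `σ ≥ 0`:
`∑_{ν,j} α_{ν,j}^{-τ} ν^σ < ∞ ↔ (∑_ν α_{ν,1}^{-τ} ν^σ < ∞ ∧ ∑_j α_{1,j}^{-τ} < ∞)`. -/
theorem stmt5 (α : ℕ+ → ℕ+ → ℝ) (hpos : ∀ ν j, 0 < α ν j)
    (hC1 : ∀ ν j, max (α ν 1) (α 1 j) ≤ α ν j)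
    (hC2 : 1 < α 1 1)
    (hC3 : ∃ ε > (0 : ℝ), ∃ n : ℕ+, ∀ ν j : ℕ+, n ≤ ν → n ≤ j →
      ε * (Real.log ((ν : ℕ) : ℝ) * Real.log ((j : ℕ) : ℝ)) ≤ Real.log (α ν j))
    (τ σ : ℝ) (hτ : 0 < τ) (hσ : 0 ≤ σ) :
    (Summable fun p : ℕ+ × ℕ+ => α p.1 p.2 ^ (-τ) * ((p.1 : ℕ) : ℝ) ^ σ) ↔
      ((Summable fun ν : ℕ+ => α ν 1 ^ (-τ) * ((ν : ℕ) : ℝ) ^ σ) ∧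
        Summable fun j : ℕ+ => α 1 j ^ (-τ)) :=
  stmt5_general α hpos hC1 hC3 τ σ hτ
end

section
/- Let a_ν ≥ a_1 > 1 with a_ν ≍ ν, let (r_j)_{j∈ℕ} satisfy 0 < r_1 ≤ r_j for all j, set ρ := liminf_{j→∞} r_j/ln(j), and let σ ≥ 0. If r_1 > σ + 1 and ρ > 1/ln(a_1), then ∑_{ν,j∈ℕ} a_ν^{-r_j}·ν^σ < ∞. -/
/-!
Since `r j ≥ r 1` and `a ν ≥ a 1`, each term factors as
`a ν ^ (-r j) ≤ a ν ^ (-r 1) * a 1 ^ (r 1 - r j) ≤ c ^ (-r 1) ν ^ (σ - r 1) * a 1 ^ (r 1 - r j)`,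
a product of a term summable in `ν` (as `σ - r 1 < -1`) and one summable in `j`: the liminf
condition gives `r j ≥ t log j` eventually with `t log (a 1) > 1`, so that
`a 1 ^ (-r j) ≤ j ^ (-t log (a 1))`.
-/

open Filter Real

lemma PNat.cofinite_eq_atTop : (cofinite : Filter ℕ+) = atTop := by
  refine le_antisymm (fun s hs => ?_) atTop_le_cofinite
  obtain ⟨N, hN⟩ := mem_atTop_sets.mp hs
  exact (Set.finite_Iio N).subset fun j hj => not_le.mp fun h => hj (hN j h)

lemma summable_pnat_rpow {p : ℝ} (hp : p < -1) : Summable fun ν : ℕ+ => ((ν : ℕ) : ℝ) ^ p :=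
  (summable_nat_rpow.mpr hp).comp_injective PNat.coe_injective

lemma rpow_log_comm {x y : ℝ} (hx : 0 < x) (hy : 0 < y) (z : ℝ) :
    x ^ (z * log y) = y ^ (z * log x) := by
  rw [rpow_def_of_pos hx, rpow_def_of_pos hy]; ring_nf

lemma summable_rpow_neg_of_lt_liminf {b : ℝ} (hb : 1 < b) {r : ℕ+ → ℝ}
    (h : ((1 / log b : ℝ) : EReal) <
      atTop.liminf fun j : ℕ+ => ((r j / log ((j : ℕ) : ℝ) : ℝ) : EReal)) :
    Summable fun j : ℕ+ => b ^ (-r j) := by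
  have hlogb : 0 < log b := log_pos hb
  obtain ⟨t, hbt, ht⟩ := EReal.exists_between_coe_real h
  rw [EReal.coe_lt_coe_iff, div_lt_iff₀ hlogb] at hbt
  refine Summable.of_norm_bounded_eventually (summable_pnat_rpow (p := -t * log b) (by linarith)) ?_
  rw [PNat.cofinite_eq_atTop]
  filter_upwards [eventually_lt_of_lt_liminf ht, eventually_ge_atTop 2] with j hj hj2
  have hj1 : (1 : ℝ) < (j : ℕ) := by exact_mod_cast hj2
  rw [EReal.coe_lt_coe_iff, lt_div_iff₀ (log_pos hj1)] at hj
  rw [norm_of_nonneg (by positivity), ← rpow_log_comm (by linarith) (by linarith)]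
  exact rpow_le_rpow_of_exponent_le hb.le (by linarith)

lemma rpow_neg_le_rpow_neg_mul {x b s u : ℝ} (hb : 0 < b) (hbx : b ≤ x) (hsu : s ≤ u) :
    x ^ (-u) ≤ x ^ (-s) * (b ^ s * b ^ (-u)) := by
  have hx : 0 < x := hb.trans_le hbx
  calc x ^ (-u) = x ^ (-s) * x ^ (s - u) := by rw [← rpow_add hx]; ring_nf
    _ ≤ x ^ (-s) * b ^ (s - u) := by
        gcongr _ * ?_
        exact rpow_le_rpow_of_nonpos hb hbx (by linarith)
    _ = x ^ (-s) * (b ^ s * b ^ (-u)) := by rw [← rpow_add hb, sub_eq_add_neg]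

theorem stmt7_general (a : ℕ+ → ℝ) (ha1 : 1 < a 1) (hmin : ∀ ν, a 1 ≤ a ν)
    (c : ℝ) (hc : 0 < c)
    (hlow : ∀ ν : ℕ+, c * ((ν : ℕ) : ℝ) ≤ a ν)
    (r : ℕ+ → ℝ) (hr1 : 0 < r 1) (hr : ∀ j, r 1 ≤ r j)
    (σ : ℝ) (hrσ : σ + 1 < r 1)
    (hρ : ((1 / Real.log (a 1) : ℝ) : EReal) <
      Filter.atTop.liminf fun j : ℕ+ => ((r j / Real.log ((j : ℕ) : ℝ) : ℝ) : EReal)) :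
    Summable fun p : ℕ+ × ℕ+ => a p.1 ^ (-(r p.2)) * ((p.1 : ℕ) : ℝ) ^ σ := by
  have ha : ∀ ν, 0 < a ν := fun ν => zero_lt_one.trans (ha1.trans_le (hmin ν))
  have hν : Summable fun ν : ℕ+ => c ^ (-r 1) * ((ν : ℕ) : ℝ) ^ (σ - r 1) :=
    (summable_pnat_rpow (by linarith)).mul_left _
  have hj : Summable fun j : ℕ+ => a 1 ^ r 1 * a 1 ^ (-r j) :=
    (summable_rpow_neg_of_lt_liminf ha1 hρ).mul_left _
  refine (hν.mul_of_nonneg hj (fun _ => by positivity) fun _ => ?_).of_nonneg_of_le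
    (fun p => ?_) fun ⟨ν, j⟩ => ?_
  · have := ha 1; positivity
  · have := ha p.1; positivity
  · calc a ν ^ (-r j) * ((ν : ℕ) : ℝ) ^ σ
        ≤ a ν ^ (-r 1) * (a 1 ^ r 1 * a 1 ^ (-r j)) * ((ν : ℕ) : ℝ) ^ σ := by
          gcongr; exact rpow_neg_le_rpow_neg_mul (ha 1) (hmin ν) (hr j)
      _ ≤ (c * (ν : ℕ)) ^ (-r 1) * (a 1 ^ r 1 * a 1 ^ (-r j)) * ((ν : ℕ) : ℝ) ^ σ := by
          gcongr ?_ * _ * _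
          exact rpow_le_rpow_of_nonpos (by positivity) (hlow ν) (neg_nonpos.mpr hr1.le)
      _ = c ^ (-r 1) * ((ν : ℕ) : ℝ) ^ (σ - r 1) * (a 1 ^ r 1 * a 1 ^ (-r j)) := by
          rw [mul_rpow hc.le (by positivity), sub_eq_neg_add, rpow_add (by positivity)]; ring

/-- If `a_ν ≥ a_1 > 1` with `a_ν ≍ ν`, `0 < r_1 ≤ r_j`, `σ ≥ 0`, `r_1 > σ + 1`,
and `ρ := liminf_j r_j / ln j > 1 / ln a_1`, then `∑_{ν,j} a_ν^{-r_j} ν^σ < ∞`. -/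
theorem stmt7 (a : ℕ+ → ℝ) (ha1 : 1 < a 1) (hmin : ∀ ν, a 1 ≤ a ν)
    (c C : ℝ) (hc : 0 < c) (hcC : c ≤ C)
    (hlow : ∀ ν : ℕ+, c * ((ν : ℕ) : ℝ) ≤ a ν)
    (hup : ∀ ν : ℕ+, a ν ≤ C * ((ν : ℕ) : ℝ))
    (r : ℕ+ → ℝ) (hr1 : 0 < r 1) (hr : ∀ j, r 1 ≤ r j)
    (σ : ℝ) (hσ : 0 ≤ σ) (hrσ : σ + 1 < r 1)
    (hρ : ((1 / Real.log (a 1) : ℝ) : EReal) <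
      Filter.atTop.liminf fun j : ℕ+ => ((r j / Real.log ((j : ℕ) : ℝ) : ℝ) : EReal)) :
    Summable fun p : ℕ+ × ℕ+ => a p.1 ^ (-(r p.2)) * ((p.1 : ℕ) : ℝ) ^ σ :=
  stmt7_general a ha1 hmin c hc hlow r hr1 hr σ hrσ hρ
end

section
/- There exists a Hilbert space H with orthonormal basis (h_ν)_{ν∈ℕ}, a set E, and an assignment ν ↦ Φh_ν ∈ 𝕂^E such that {Φh_ν : ν ∈ ℕ} is linearly independent, ∑_{ν∈ℕ} |Φh_ν(y)|² < ∞ for every y ∈ E, and yet the induced linear map Φf(y) := ∑_{ν∈ℕ} ⟨f, h_ν⟩·Φh_ν(y) is not injective. Concretely: take H = ℓ², E = ℕ, h_ν the canonical unit vectors, Φh_ν := ν·(h_ν − h_{ν−1}) (with h_0 := 0, viewing sequences as functions on ℕ); then for f ∈ ℓ² with ⟨f, h_ν⟩ = 1/ν, one has Φf(y) = 0 for all y ∈ ℕ while f ≠ 0. -/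
/-!
The vectors `ψ ν = (ν + 1) (e ν - e (ν - 1))` (with `e (-1) = 0`) form a triangular family with
nonzero diagonal, so they are linearly independent, and every coordinate `y` sees only `ψ y` and
`ψ (y + 1)`. With `c ν = 1 / (ν + 1)` the series `∑ c ν • ψ ν = ∑ (e ν - e (ν - 1))` telescopes
to zero in every coordinate, although `c` is a nonzero element of `ℓ²`.
-/

theorem linearIndependent_of_apply_eq_zero_of_lt {R ι : Type*} [Ring R] [NoZeroDivisors R]
    [LinearOrder ι] {f : ι → ι → R} (h_lt : ∀ i j, i < j → f i j = 0)
    (h_diag : ∀ i, f i i ≠ 0) : LinearIndependent R f := by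
  classical
  rw [linearIndependent_iff']
  intro s
  induction s using Finset.induction_on_max with
  | empty => simp
  | insert a s ha ih =>
    intro g hg i hi
    rw [Finset.sum_insert fun h => lt_irrefl a (ha a h)] at hg
    have hga : g a = 0 := by
      have hs : ∑ x ∈ s, g x * f x a = 0 :=
        Finset.sum_eq_zero fun x hx => by rw [h_lt x a (ha x hx), mul_zero]
      have hga' := congrFun hg a
      simp only [Pi.add_apply, Finset.sum_apply, Pi.smul_apply, smul_eq_mul, hs, add_zero,
        Pi.zero_apply] at hga'
      exact (mul_eq_zero.mp hga').resolve_right (h_diag a)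
    rw [hga, zero_smul, zero_add] at hg
    rcases Finset.mem_insert.mp hi with rfl | hi
    · exact hga
    · exact ih g hg i hi

theorem summable_norm_inv_natCast_add_one_sq {𝕜 : Type*} [RCLike 𝕜] :
    Summable fun n : ℕ => ‖((n : 𝕜) + 1)⁻¹‖ ^ 2 := by
  refine ((Real.summable_one_div_nat_add_rpow 1 2).mpr one_lt_two).congr fun n => ?_
  have hcast : ((n : 𝕜) + 1) = (((n : ℝ) + 1 : ℝ) : 𝕜) := by push_cast; rfl
  rw [hcast, norm_inv, RCLike.norm_ofReal]
  norm_cast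
  simp

/-- There is a family `ψ_ν ∈ 𝕜^ℕ` (namely `ψ_ν = ν(h_ν - h_{ν-1})`, here written with
index shift so that `ν ∈ ℕ` stands for the positive integer `ν + 1`) which is linearly
independent and pointwise square-summable, and a nonzero `ℓ²` coefficient sequence
`c_ν = 1/(ν+1)` with `∑_ν c_ν ψ_ν(y) = 0` for all `y`; hence the induced map `Φ` is
not injective. -/
theorem stmt16 {𝕜 : Type*} [RCLike 𝕜] :
    ∃ ψ : ℕ → ℕ → 𝕜,
      ψ = (fun (ν y : ℕ) => if y = ν then ((ν : 𝕜) + 1)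
        else if y + 1 = ν then -((ν : 𝕜) + 1) else 0) ∧
      LinearIndependent 𝕜 ψ ∧
      (∀ y : ℕ, Summable fun ν : ℕ => ‖ψ ν y‖ ^ 2) ∧
      ∃ c : ℕ → 𝕜,
        c = (fun ν : ℕ => ((ν : 𝕜) + 1)⁻¹) ∧
        (Summable fun ν : ℕ => ‖c ν‖ ^ 2) ∧ c ≠ 0 ∧
        ∀ y : ℕ, HasSum (fun ν : ℕ => c ν * ψ ν y) 0 := by
  set ψ : ℕ → ℕ → 𝕜 := fun ν y => if y = ν then ((ν : 𝕜) + 1)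
    else if y + 1 = ν then -((ν : 𝕜) + 1) else 0
  have h_support : ∀ ν y, ν ∉ ({y, y + 1} : Finset ℕ) → ψ ν y = 0 := by
    intro ν y hν
    simp only [Finset.mem_insert, Finset.mem_singleton, not_or] at hν
    simp only [ψ, if_neg (Ne.symm hν.1), if_neg (Ne.symm hν.2)]
  have h_upper : ∀ ν y, ν < y → ψ ν y = 0 := fun ν y h => h_support ν y (by
    simp only [Finset.mem_insert, Finset.mem_singleton]; omega)
  have hne : ∀ n : ℕ, (n : 𝕜) + 1 ≠ 0 := Nat.cast_add_one_ne_zero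
  have h_diag : ∀ ν, ψ ν ν ≠ 0 := fun ν => by simpa only [ψ, if_pos rfl] using hne ν
  refine ⟨ψ, rfl, linearIndependent_of_apply_eq_zero_of_lt h_upper h_diag,
    fun y => summable_of_ne_finset_zero (s := {y, y + 1}) fun ν hν => by simp [h_support ν y hν],
    _, rfl, summable_norm_inv_natCast_add_one_sq, fun h => by simpa using congrFun h 0,
    fun y => ?_⟩
  have h_telescope : ∑ ν ∈ {y, y + 1}, ((ν : 𝕜) + 1)⁻¹ * ψ ν y = 0 := by
    have hy : y ≠ y + 1 := (Nat.succ_ne_self y).symm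
    rw [Finset.sum_pair hy]
    simp only [ψ, if_pos rfl, if_neg hy, if_true, mul_neg, inv_mul_cancel₀ (hne y),
      inv_mul_cancel₀ (hne (y + 1)), add_neg_cancel]
  exact h_telescope ▸ hasSum_sum_of_ne_finset_zero fun ν hν => by rw [h_support ν y hν, mul_zero]
end

section
/- Let T_n denote piecewise-constant midpoint interpolation on the 2^n dyadic subintervals of [0,1]: for f : [0,1] → ℂ, T_n(f) is constant on each interval I_m = [m/2^n, (m+1)/2^n) (with the last interval closed) equal to f evaluated at the midpoint of I_m. Let (e_ν)_{ν∈ℕ₀} be the L₂-normalized Haar basis of L₂([0,1]) with e_0 = 1, and let r_1 > 1. Then there exists a constant C > 0 such that for every n ∈ ℕ₀ and every finite linear combination f = ∑_ν a_ν e_ν, one has ‖f − T_n(f)‖_{L₂([0,1])} ≤ C·2^{−n·r_1/2}·(∑_{ν∈ℕ₀} |a_ν|²·max(ν,1)^{r_1})^{1/2}. One may take C = 1 + (1 − 2^{1−r_1})^{−1/2}. -/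
open scoped Classical

/-- The `L₂`-normalized Haar functions on `[0,1]`: `haarFn 0 = 1`, and for
`ν = 2^ℓ + m` (`ℓ ∈ ℕ₀`, `0 ≤ m < 2^ℓ`), `haarFn ν` equals `2^{ℓ/2}` on
`[m 2^{-ℓ}, (m + 1/2) 2^{-ℓ})`, `-2^{ℓ/2}` on `[(m + 1/2) 2^{-ℓ}, (m+1) 2^{-ℓ})`,
and `0` elsewhere. -/
noncomputable def haarFn (ν : ℕ) (x : ℝ) : ℝ :=
  if ν = 0 then 1
  else
    if ((ν - 2 ^ Nat.log 2 ν : ℕ) : ℝ) / 2 ^ Nat.log 2 ν ≤ x ∧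
        x < (((ν - 2 ^ Nat.log 2 ν : ℕ) : ℝ) + 1 / 2) / 2 ^ Nat.log 2 ν then
      (2 : ℝ) ^ ((Nat.log 2 ν : ℝ) / 2)
    else if (((ν - 2 ^ Nat.log 2 ν : ℕ) : ℝ) + 1 / 2) / 2 ^ Nat.log 2 ν ≤ x ∧
        x < (((ν - 2 ^ Nat.log 2 ν : ℕ) : ℝ) + 1) / 2 ^ Nat.log 2 ν then
      -((2 : ℝ) ^ ((Nat.log 2 ν : ℝ) / 2))
    else 0

/-- Piecewise constant midpoint interpolation on the `2^n` dyadic subintervals of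
`[0,1]`: `midInterp n f x` is the value of `f` at the midpoint of the dyadic
interval of length `2^{-n}` containing `x` (the last interval being closed). -/
noncomputable def midInterp {α : Type*} (n : ℕ) (f : ℝ → α) (x : ℝ) : α :=
  f ((↑(min (⌊x * 2 ^ n⌋₊) (2 ^ n - 1)) + (1 / 2 : ℝ)) / 2 ^ n)

/-! Haar functions of index `ν < 2 ^ n` are constant on the dyadic cells of length `2 ^ (-n)`,
so midpoint interpolation reproduces them and only the tail `g = ∑_{ν ≥ 2^n} a_ν e_ν`
contributes to `f - T_n f`. At any point at most one Haar function of each level `ℓ` is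
nonzero, and there `e_ν² ≤ 2^ℓ`; Cauchy–Schwarz with weights `ν^{±r/2}` then gives
`|g(y)|² ≤ (∑_{ℓ ≥ n} 2^{ℓ(1-r)}) ∑_ν |a_ν|² ν^r 1_{supp e_ν}(y)`. Both at `y = x` and at the
interpolation node `y` of `x`, the indicator of `supp e_ν` is dominated by the indicator at `x`
of the level-`n` dyadic cell containing `supp e_ν`, which has measure `2^{-n}`. Integrating
gives the bound with `C = 2 (1 - 2^{1-r})^{-1/2}`. -/

open Finset MeasureTheory

def dyadicCell (ℓ m : ℕ) : Set ℝ := Set.Ico (m / 2 ^ ℓ) ((m + 1) / 2 ^ ℓ)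

theorem mem_dyadicCell_iff {ℓ m : ℕ} {x : ℝ} :
    x ∈ dyadicCell ℓ m ↔ 0 ≤ x ∧ ⌊x * 2 ^ ℓ⌋₊ = m := by
  have hp : (0 : ℝ) < 2 ^ ℓ := by positivity
  rw [dyadicCell, Set.mem_Ico, div_le_iff₀ hp, lt_div_iff₀ hp]
  constructor
  · rintro ⟨h₁, h₂⟩
    have hx : 0 ≤ x := nonneg_of_mul_nonneg_left ((Nat.cast_nonneg m).trans h₁) hp
    exact ⟨hx, (Nat.floor_eq_iff (by positivity)).2 ⟨h₁, h₂⟩⟩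
  · rintro ⟨hx, rfl⟩
    exact ⟨Nat.floor_le (by positivity), Nat.lt_floor_add_one _⟩

theorem Nat.floor_mul_two_pow_eq_div {k ℓ : ℕ} (h : k ≤ ℓ) (x : ℝ) :
    ⌊x * 2 ^ k⌋₊ = ⌊x * 2 ^ ℓ⌋₊ / 2 ^ (ℓ - k) := by
  have hpow : (2 : ℝ) ^ ℓ = 2 ^ k * 2 ^ (ℓ - k) := by rw [← pow_add, Nat.add_sub_cancel' h]
  rw [← Nat.floor_div_natCast, hpow, Nat.cast_pow, Nat.cast_ofNat, ← mul_assoc,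
    mul_div_cancel_right₀ _ (by positivity)]

theorem dyadicCell_subset {k ℓ : ℕ} (h : k ≤ ℓ) (m : ℕ) :
    dyadicCell ℓ m ⊆ dyadicCell k (m / 2 ^ (ℓ - k)) := by
  intro x hx
  rw [mem_dyadicCell_iff] at hx ⊢
  exact ⟨hx.1, by rw [Nat.floor_mul_two_pow_eq_div h, hx.2]⟩

theorem eq_of_mem_dyadicCell {ℓ m m' : ℕ} {x : ℝ} (h : x ∈ dyadicCell ℓ m)
    (h' : x ∈ dyadicCell ℓ m') : m = m' :=
  (mem_dyadicCell_iff.1 h).2.symm.trans (mem_dyadicCell_iff.1 h').2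

theorem measurableSet_dyadicCell (ℓ m : ℕ) : MeasurableSet (dyadicCell ℓ m) := measurableSet_Ico

theorem setIntegral_indicator_dyadicCell_le (s : Set ℝ) (ℓ m : ℕ) :
    ∫ x in s, (dyadicCell ℓ m).indicator (1 : ℝ → ℝ) x ≤ 1 / 2 ^ ℓ := by
  rw [integral_indicator_one (measurableSet_dyadicCell ℓ m),
    measureReal_restrict_apply (measurableSet_dyadicCell ℓ m)]
  calc volume.real (dyadicCell ℓ m ∩ s) ≤ volume.real (dyadicCell ℓ m) :=
        measureReal_mono Set.inter_subset_left
          (by rw [dyadicCell, Real.volume_Ico]; exact ENNReal.ofReal_ne_top)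
    _ = 1 / 2 ^ ℓ := by
        rw [dyadicCell, Real.volume_real_Ico_of_le (by gcongr; linarith)]
        ring

theorem haarFn_eq_ite {ν : ℕ} (hν : ν ≠ 0) (x : ℝ) :
    haarFn ν x =
      if x ∈ dyadicCell (Nat.log 2 ν + 1) (2 * (ν - 2 ^ Nat.log 2 ν)) then
        (2 : ℝ) ^ ((Nat.log 2 ν : ℝ) / 2)
      else if x ∈ dyadicCell (Nat.log 2 ν + 1) (2 * (ν - 2 ^ Nat.log 2 ν) + 1) then
        -(2 : ℝ) ^ ((Nat.log 2 ν : ℝ) / 2)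
      else 0 := by
  set ℓ := Nat.log 2 ν
  set m := ν - 2 ^ ℓ
  have hp : (2 : ℝ) ^ (ℓ + 1) = 2 * 2 ^ ℓ := by ring
  have e₁ : ((2 * m : ℕ) : ℝ) / 2 ^ (ℓ + 1) = m / 2 ^ ℓ := by
    rw [hp]; push_cast; field_simp
  have e₂ : ((2 * m + 1 : ℕ) : ℝ) / 2 ^ (ℓ + 1) = (m + 1 / 2) / 2 ^ ℓ := by
    rw [hp]; push_cast; field_simp
  have e₃ : (((2 * m + 1 : ℕ) : ℝ) + 1) / 2 ^ (ℓ + 1) = (m + 1) / 2 ^ ℓ := by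
    rw [hp]; push_cast; field_simp; ring
  simp only [haarFn, if_neg hν, dyadicCell, Set.mem_Ico, e₁, e₃]
  rw [← e₂]
  push_cast
  rfl

def haarCell (ν : ℕ) : Set ℝ := dyadicCell (Nat.log 2 ν) (ν - 2 ^ Nat.log 2 ν)

theorem mem_haarCell_of_haarFn_ne_zero {ν : ℕ} {x : ℝ} (hν : ν ≠ 0) (h : haarFn ν x ≠ 0) :
    x ∈ haarCell ν := by
  have hsub := dyadicCell_subset (Nat.le_add_right (Nat.log 2 ν) 1)
  rw [Nat.add_sub_cancel_left, pow_one] at hsub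
  rw [haarFn_eq_ite hν] at h
  split_ifs at h with h₁ h₂
  · simpa [haarCell] using hsub _ h₁
  · simpa [haarCell, Nat.mul_add_div] using hsub _ h₂
  · exact absurd rfl h

theorem haarFn_sq_le (ν : ℕ) (x : ℝ) : haarFn ν x ^ 2 ≤ 2 ^ Nat.log 2 ν := by
  rcases eq_or_ne ν 0 with rfl | hν
  · simp [haarFn]
  have hsq : ((2 : ℝ) ^ ((Nat.log 2 ν : ℝ) / 2)) ^ 2 = 2 ^ Nat.log 2 ν := by
    rw [← Real.rpow_natCast _ 2, ← Real.rpow_mul zero_le_two, ← Real.rpow_natCast]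
    norm_num
  rw [haarFn_eq_ite hν]
  split_ifs <;> simp [hsq]

theorem haarFn_eq_of_mem_dyadicCell {n ν j : ℕ} (hν : ν < 2 ^ n) {x y : ℝ}
    (hx : x ∈ dyadicCell n j) (hy : y ∈ dyadicCell n j) : haarFn ν x = haarFn ν y := by
  rcases eq_or_ne ν 0 with rfl | hν₀
  · simp [haarFn]
  have hℓ : Nat.log 2 ν + 1 ≤ n := Nat.log_lt_of_lt_pow hν₀ hν
  rw [mem_dyadicCell_iff] at hx hy
  have hcell : ∀ k, x ∈ dyadicCell (Nat.log 2 ν + 1) k ↔ y ∈ dyadicCell (Nat.log 2 ν + 1) k := by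
    intro k
    simp only [mem_dyadicCell_iff, Nat.floor_mul_two_pow_eq_div hℓ, hx, hy]
  simp only [haarFn_eq_ite hν₀, hcell]

noncomputable def dyadicMidpoint (n : ℕ) (x : ℝ) : ℝ :=
  ((min ⌊x * 2 ^ n⌋₊ (2 ^ n - 1) : ℕ) + 1 / 2) / 2 ^ n

theorem midInterp_apply {α : Type*} (n : ℕ) (f : ℝ → α) (x : ℝ) :
    midInterp n f x = f (dyadicMidpoint n x) := rfl

theorem dyadicMidpoint_mem_dyadicCell (n : ℕ) {x : ℝ} (hx : x ∈ Set.Ico (0 : ℝ) 1) :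
    dyadicMidpoint n x ∈ dyadicCell n ⌊x * 2 ^ n⌋₊ := by
  have hp : (0 : ℝ) < 2 ^ n := by positivity
  have hfloor : ⌊x * 2 ^ n⌋₊ < 2 ^ n :=
    (Nat.floor_lt (by nlinarith [hx.1])).2 (by push_cast; nlinarith [hx.2])
  rw [dyadicMidpoint, min_eq_left (Nat.le_sub_one_of_lt hfloor), dyadicCell, Set.mem_Ico]
  constructor <;> gcongr <;> linarith

theorem self_mem_dyadicCell (n : ℕ) {x : ℝ} (hx : 0 ≤ x) : x ∈ dyadicCell n ⌊x * 2 ^ n⌋₊ :=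
  mem_dyadicCell_iff.2 ⟨hx, rfl⟩

theorem haarFn_dyadicMidpoint {n ν : ℕ} (hν : ν < 2 ^ n) {x : ℝ} (hx : x ∈ Set.Ico (0 : ℝ) 1) :
    haarFn ν (dyadicMidpoint n x) = haarFn ν x :=
  haarFn_eq_of_mem_dyadicCell hν (dyadicMidpoint_mem_dyadicCell n hx) (self_mem_dyadicCell n hx.1)

-- For `n ≤ Nat.log 2 ν`, the dyadic cell of level `n` containing `haarCell ν`.
def dyadicAncestor (n ν : ℕ) : Set ℝ :=
  dyadicCell n ((ν - 2 ^ Nat.log 2 ν) / 2 ^ (Nat.log 2 ν - n))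

theorem indicator_haarCell_le_indicator_dyadicAncestor {n ν j : ℕ} (h : n ≤ Nat.log 2 ν)
    {x y : ℝ} (hx : x ∈ dyadicCell n j) (hy : y ∈ dyadicCell n j) :
    (haarCell ν).indicator (1 : ℝ → ℝ) y ≤ (dyadicAncestor n ν).indicator 1 x := by
  by_cases hyν : y ∈ haarCell ν
  · have hxν : x ∈ dyadicAncestor n ν := by
      rw [dyadicAncestor, ← eq_of_mem_dyadicCell hy (dyadicCell_subset h _ hyν)]
      exact hx
    simp [hyν, hxν]
  · simp only [Set.indicator_of_notMem hyν]
    exact Set.indicator_nonneg (fun _ _ => zero_le_one) x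

theorem sum_pow_le_of_forall_le {q : ℝ} (hq₀ : 0 ≤ q) (hq₁ : q < 1) {n : ℕ} {u : Finset ℕ}
    (hu : ∀ ℓ ∈ u, n ≤ ℓ) : ∑ ℓ ∈ u, q ^ ℓ ≤ q ^ n / (1 - q) := by
  have hsub : u ⊆ Ico n (u.sup id + 1) := fun ℓ hℓ =>
    mem_Ico.2 ⟨hu ℓ hℓ, Nat.lt_succ_of_le (le_sup (f := id) hℓ)⟩
  exact (sum_le_sum_of_subset_of_nonneg hsub fun _ _ _ => by positivity).trans
    (geom_sum_Ico_le_of_lt_one hq₀ hq₁)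

theorem rpow_neg_mul_haarFn_sq_le {r : ℝ} (hr : 0 ≤ r) {ν : ℕ} (hν : ν ≠ 0) (y : ℝ) :
    (ν : ℝ) ^ (-r) * haarFn ν y ^ 2 ≤
      if y ∈ haarCell ν then ((2 : ℝ) ^ (1 - r)) ^ Nat.log 2 ν else 0 := by
  split_ifs with hy
  · have hpow : (2 ^ Nat.log 2 ν : ℝ) ≤ ν := by exact_mod_cast Nat.pow_log_le_self 2 hν
    calc (ν : ℝ) ^ (-r) * haarFn ν y ^ 2
        ≤ ((2 : ℝ) ^ Nat.log 2 ν) ^ (-r) * 2 ^ Nat.log 2 ν :=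
          mul_le_mul (Real.rpow_le_rpow_of_nonpos (by positivity) hpow (by linarith))
            (haarFn_sq_le ν y) (sq_nonneg _) (by positivity)
      _ = ((2 : ℝ) ^ (1 - r)) ^ Nat.log 2 ν := by
          rw [← Real.rpow_natCast_mul zero_le_two, ← Real.rpow_mul_natCast zero_le_two,
            ← Real.rpow_natCast 2, ← Real.rpow_add two_pos]
          ring_nf
  · rw [not_imp_comm.1 (mem_haarCell_of_haarFn_ne_zero hν) hy]
    simp

theorem two_rpow_one_sub_lt_one {r : ℝ} (hr : 1 < r) : (2 : ℝ) ^ (1 - r) < 1 :=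
  Real.rpow_lt_one_of_one_lt_of_neg one_lt_two (by linarith)

theorem sum_rpow_neg_mul_haarFn_sq_le {r : ℝ} (hr : 1 < r) {n : ℕ} {t : Finset ℕ}
    (ht : ∀ ν ∈ t, 2 ^ n ≤ ν) (y : ℝ) :
    ∑ ν ∈ t, (ν : ℝ) ^ (-r) * haarFn ν y ^ 2 ≤
      ((2 : ℝ) ^ (1 - r)) ^ n / (1 - 2 ^ (1 - r)) := by
  have hν₀ : ∀ ν ∈ t, ν ≠ 0 := fun ν hν => ((Nat.two_pow_pos n).trans_le (ht ν hν)).ne'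
  -- at each level `ℓ`, `y` lies in the support of at most one Haar function
  have hinj : Set.InjOn (Nat.log 2) (t.filter (y ∈ haarCell ·)) := by
    intro ν hν ν' hν' hlog
    rw [coe_filter] at hν hν'
    have hcell := hν'.2
    rw [haarCell, ← hlog] at hcell
    have := eq_of_mem_dyadicCell hν.2 hcell
    have := Nat.pow_log_le_self 2 (hν₀ ν hν.1)
    have := hlog ▸ Nat.pow_log_le_self 2 (hν₀ ν' hν'.1)
    omega
  calc ∑ ν ∈ t, (ν : ℝ) ^ (-r) * haarFn ν y ^ 2
      ≤ ∑ ν ∈ t, if y ∈ haarCell ν then ((2 : ℝ) ^ (1 - r)) ^ Nat.log 2 ν else 0 :=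
        sum_le_sum fun ν hν => rpow_neg_mul_haarFn_sq_le (by linarith) (hν₀ ν hν) y
    _ = ∑ ℓ ∈ (t.filter (y ∈ haarCell ·)).image (Nat.log 2), ((2 : ℝ) ^ (1 - r)) ^ ℓ := by
        rw [sum_image hinj, sum_filter]
    _ ≤ ((2 : ℝ) ^ (1 - r)) ^ n / (1 - 2 ^ (1 - r)) := by
        refine sum_pow_le_of_forall_le (by positivity) (two_rpow_one_sub_lt_one hr) ?_
        simp only [mem_image, mem_filter]
        rintro _ ⟨ν, ⟨hν, -⟩, rfl⟩
        exact Nat.le_log_of_pow_le one_lt_two (ht ν hν)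

theorem norm_sum_mul_haarFn_sq_le {r : ℝ} (hr : 1 < r) {n : ℕ} {t : Finset ℕ}
    (ht : ∀ ν ∈ t, 2 ^ n ≤ ν) (a : ℕ → ℂ) (y : ℝ) :
    ‖∑ ν ∈ t, a ν * (haarFn ν y : ℂ)‖ ^ 2 ≤
      ((2 : ℝ) ^ (1 - r)) ^ n / (1 - 2 ^ (1 - r)) *
        ∑ ν ∈ t, ‖a ν‖ ^ 2 * (ν : ℝ) ^ r * (haarCell ν).indicator 1 y := by
  set u : ℕ → ℝ := fun ν => ‖a ν‖ * (ν : ℝ) ^ (r / 2) * (haarCell ν).indicator 1 y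
  set v : ℕ → ℝ := fun ν => (ν : ℝ) ^ (-(r / 2)) * |haarFn ν y|
  have hfactor : ∀ ν ∈ t, ‖a ν * (haarFn ν y : ℂ)‖ = u ν * v ν := by
    intro ν hν
    have hν₀ : ν ≠ 0 := ((Nat.two_pow_pos n).trans_le (ht ν hν)).ne'
    rw [norm_mul, Complex.norm_real, Real.norm_eq_abs]
    by_cases hy : y ∈ haarCell ν
    · have hν' : (0 : ℝ) < ν := by positivity
      simp only [u, v, Set.indicator_of_mem hy, Pi.one_apply, Real.rpow_neg hν'.le]
      field_simp
    · simp [u, v, not_imp_comm.1 (mem_haarCell_of_haarFn_ne_zero hν₀) hy]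
  have hu : ∀ ν, u ν ^ 2 = ‖a ν‖ ^ 2 * (ν : ℝ) ^ r * (haarCell ν).indicator 1 y := by
    intro ν
    by_cases hy : y ∈ haarCell ν
    · simp [u, hy, mul_pow, ← Real.rpow_mul_natCast (Nat.cast_nonneg ν)]
    · simp [u, hy]
  have hv : ∀ ν, v ν ^ 2 = (ν : ℝ) ^ (-r) * haarFn ν y ^ 2 := by
    intro ν
    simp [v, mul_pow, ← Real.rpow_mul_natCast (Nat.cast_nonneg ν)]
  calc ‖∑ ν ∈ t, a ν * (haarFn ν y : ℂ)‖ ^ 2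
      ≤ (∑ ν ∈ t, ‖a ν * (haarFn ν y : ℂ)‖) ^ 2 := by gcongr; exact norm_sum_le _ _
    _ = (∑ ν ∈ t, u ν * v ν) ^ 2 := by rw [sum_congr rfl hfactor]
    _ ≤ (∑ ν ∈ t, u ν ^ 2) * ∑ ν ∈ t, v ν ^ 2 := sum_mul_sq_le_sq_mul_sq _ _ _
    _ ≤ _ := by
        rw [mul_comm]
        simp only [hu, hv]
        exact mul_le_mul_of_nonneg_right (sum_rpow_neg_mul_haarFn_sq_le hr ht y)
          (sum_nonneg fun ν _ => by rw [← hu]; positivity)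

theorem sum_sub_sum_dyadicMidpoint (n : ℕ) (s : Finset ℕ) (a : ℕ → ℂ) {x : ℝ}
    (hx : x ∈ Set.Ico (0 : ℝ) 1) :
    (∑ ν ∈ s, a ν * (haarFn ν x : ℂ)) - ∑ ν ∈ s, a ν * (haarFn ν (dyadicMidpoint n x) : ℂ) =
      (∑ ν ∈ s with 2 ^ n ≤ ν, a ν * (haarFn ν x : ℂ)) -
        ∑ ν ∈ s with 2 ^ n ≤ ν, a ν * (haarFn ν (dyadicMidpoint n x) : ℂ) := by
  have hlow : ∑ ν ∈ s with ¬2 ^ n ≤ ν, a ν * (haarFn ν (dyadicMidpoint n x) : ℂ) =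
      ∑ ν ∈ s with ¬2 ^ n ≤ ν, a ν * (haarFn ν x : ℂ) :=
    sum_congr rfl fun ν hν => by rw [haarFn_dyadicMidpoint (not_le.1 (mem_filter.1 hν).2) hx]
  rw [← sum_filter_add_sum_filter_not s (2 ^ n ≤ ·) (fun ν => a ν * (haarFn ν x : ℂ)),
    ← sum_filter_add_sum_filter_not s (2 ^ n ≤ ·)
      (fun ν => a ν * (haarFn ν (dyadicMidpoint n x) : ℂ)), hlow]
  exact add_sub_add_right_eq_sub _ _ _

theorem norm_sub_midInterp_sq_le {r : ℝ} (hr : 1 < r) (n : ℕ) (s : Finset ℕ) (a : ℕ → ℂ)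
    {x : ℝ} (hx : x ∈ Set.Ico (0 : ℝ) 1) :
    ‖(∑ ν ∈ s, a ν * (haarFn ν x : ℂ)) -
        midInterp n (fun y => ∑ ν ∈ s, a ν * (haarFn ν y : ℂ)) x‖ ^ 2 ≤
      4 * (((2 : ℝ) ^ (1 - r)) ^ n / (1 - 2 ^ (1 - r))) *
        ∑ ν ∈ s with 2 ^ n ≤ ν, ‖a ν‖ ^ 2 * (ν : ℝ) ^ r * (dyadicAncestor n ν).indicator 1 x := by
  rw [midInterp_apply, sum_sub_sum_dyadicMidpoint n s a hx]
  set K := ((2 : ℝ) ^ (1 - r)) ^ n / (1 - 2 ^ (1 - r))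
  set t := s.filter (2 ^ n ≤ ·)
  have ht : ∀ ν ∈ t, 2 ^ n ≤ ν := fun ν hν => (mem_filter.1 hν).2
  have hK : 0 ≤ K := div_nonneg (by positivity) (sub_nonneg.2 (two_rpow_one_sub_lt_one hr).le)
  have hcell : ∀ y ∈ dyadicCell n ⌊x * 2 ^ n⌋₊, ‖∑ ν ∈ t, a ν * (haarFn ν y : ℂ)‖ ^ 2 ≤
      K * ∑ ν ∈ t, ‖a ν‖ ^ 2 * (ν : ℝ) ^ r * (dyadicAncestor n ν).indicator 1 x := by
    intro y hy
    refine (norm_sum_mul_haarFn_sq_le hr ht a y).trans (mul_le_mul_of_nonneg_left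
      (sum_le_sum fun ν hν => mul_le_mul_of_nonneg_left ?_ (by positivity)) hK)
    exact indicator_haarCell_le_indicator_dyadicAncestor
      (Nat.le_log_of_pow_le one_lt_two (ht ν hν)) (self_mem_dyadicCell n hx.1) hy
  have h₁ := hcell x (self_mem_dyadicCell n hx.1)
  have h₂ := hcell _ (dyadicMidpoint_mem_dyadicCell n hx)
  have htri := pow_le_pow_left₀ (norm_nonneg _) (norm_sub_le
    (∑ ν ∈ t, a ν * (haarFn ν x : ℂ)) (∑ ν ∈ t, a ν * (haarFn ν (dyadicMidpoint n x) : ℂ))) 2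
  nlinarith [sq_nonneg (‖∑ ν ∈ t, a ν * (haarFn ν x : ℂ)‖ -
    ‖∑ ν ∈ t, a ν * (haarFn ν (dyadicMidpoint n x) : ℂ)‖)]

theorem integral_norm_sub_midInterp_sq_le {r : ℝ} (hr : 1 < r) (n : ℕ) (s : Finset ℕ)
    (a : ℕ → ℂ) :
    ∫ x in Set.Ico (0 : ℝ) 1, ‖(∑ ν ∈ s, a ν * (haarFn ν x : ℂ)) -
        midInterp n (fun y => ∑ ν ∈ s, a ν * (haarFn ν y : ℂ)) x‖ ^ 2 ≤
      4 * (((2 : ℝ) ^ (1 - r)) ^ n / (1 - 2 ^ (1 - r))) *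
        (∑ ν ∈ s with 2 ^ n ≤ ν, ‖a ν‖ ^ 2 * (ν : ℝ) ^ r) / 2 ^ n := by
  set K := ((2 : ℝ) ^ (1 - r)) ^ n / (1 - 2 ^ (1 - r))
  have hint : ∀ ν, Integrable ((dyadicAncestor n ν).indicator (1 : ℝ → ℝ))
      (volume.restrict (Set.Ico (0 : ℝ) 1)) :=
    fun ν => (integrable_const 1).indicator (measurableSet_dyadicCell _ _)
  calc _ ≤ ∫ x in Set.Ico (0 : ℝ) 1, 4 * K * ∑ ν ∈ s with 2 ^ n ≤ ν,
          ‖a ν‖ ^ 2 * (ν : ℝ) ^ r * (dyadicAncestor n ν).indicator 1 x :=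
        integral_mono_of_nonneg (.of_forall fun _ => by positivity)
          ((integrable_finsetSum _ fun ν _ => (hint ν).const_mul _).const_mul _)
          ((ae_restrict_iff' measurableSet_Ico).2
            (.of_forall fun _ hx => norm_sub_midInterp_sq_le hr n s a hx))
    _ = 4 * K * ∑ ν ∈ s with 2 ^ n ≤ ν, ‖a ν‖ ^ 2 * (ν : ℝ) ^ r *
          ∫ x in Set.Ico (0 : ℝ) 1, (dyadicAncestor n ν).indicator 1 x := by
        rw [integral_const_mul, integral_finsetSum _ fun ν _ => (hint ν).const_mul _]
        simp only [integral_const_mul]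
    _ ≤ 4 * K * ∑ ν ∈ s with 2 ^ n ≤ ν, ‖a ν‖ ^ 2 * (ν : ℝ) ^ r * (1 / 2 ^ n) := by
        have hK : 0 ≤ K := div_nonneg (by positivity) (sub_nonneg.2 (two_rpow_one_sub_lt_one hr).le)
        gcongr
        exact setIntegral_indicator_dyadicCell_le _ _ _
    _ = _ := by rw [← sum_mul]; ring

/-- For `r₁ > 1` there is `C > 0` such that for all `n` and all finite linear
combinations `f = ∑_ν a_ν e_ν` of Haar functions,
`‖f - T_n f‖_{L₂[0,1]} ≤ C · 2^{-n r₁/2} · (∑_ν |a_ν|² max(ν,1)^{r₁})^{1/2}`. -/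
theorem stmt18 (r₁ : ℝ) (hr : 1 < r₁) :
    ∃ C > (0 : ℝ), ∀ (n : ℕ) (a : ℕ →₀ ℂ),
      Real.sqrt (∫ x in Set.Icc (0 : ℝ) 1,
          ‖(∑ ν ∈ a.support, a ν * (haarFn ν x : ℂ)) -
            midInterp n (fun t => ∑ ν ∈ a.support, a ν * (haarFn ν t : ℂ)) x‖ ^ 2) ≤
        C * (2 : ℝ) ^ (-(n : ℝ) * r₁ / 2) *
          Real.sqrt (∑ ν ∈ a.support, ‖a ν‖ ^ 2 * max (ν : ℝ) 1 ^ r₁) := by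
  set q : ℝ := 2 ^ (1 - r₁)
  have hq : 0 < 1 - q := sub_pos.2 (two_rpow_one_sub_lt_one hr)
  refine ⟨2 / √(1 - q), by positivity, fun n a => ?_⟩
  set S := ∑ ν ∈ a.support, ‖a ν‖ ^ 2 * max (ν : ℝ) 1 ^ r₁
  have hS : ∑ ν ∈ a.support with 2 ^ n ≤ ν, ‖a ν‖ ^ 2 * (ν : ℝ) ^ r₁ ≤ S :=
    (sum_le_sum fun ν _ => by gcongr; exact le_max_left _ _).trans
      (sum_le_sum_of_subset_of_nonneg (filter_subset _ _) fun _ _ _ => by positivity)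
  have hpow : q ^ n / 2 ^ n = (2 : ℝ) ^ (-(n : ℝ) * r₁) := by
    rw [← Real.rpow_mul_natCast zero_le_two, ← Real.rpow_natCast, ← Real.rpow_sub two_pos]
    ring_nf
  have hbound : (2 / √(1 - q) * (2 : ℝ) ^ (-(n : ℝ) * r₁ / 2) * √S) ^ 2 =
      4 / (1 - q) * 2 ^ (-(n : ℝ) * r₁) * S := by
    rw [mul_pow, mul_pow, div_pow, Real.sq_sqrt hq.le, Real.sq_sqrt (by positivity),
      ← Real.rpow_mul_natCast zero_le_two]
    ring_nf
  rw [integral_Icc_eq_integral_Ico, ← Real.sqrt_sq (by positivity : 0 ≤ 2 / √(1 - q) *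
    (2 : ℝ) ^ (-(n : ℝ) * r₁ / 2) * √S), hbound, ← hpow]
  gcongr
  calc _ ≤ 4 * (q ^ n / (1 - q)) *
        (∑ ν ∈ a.support with 2 ^ n ≤ ν, ‖a ν‖ ^ 2 * (ν : ℝ) ^ r₁) / 2 ^ n :=
        integral_norm_sub_midInterp_sq_le hr n a.support a
    _ = 4 / (1 - q) * (q ^ n / 2 ^ n) *
        ∑ ν ∈ a.support with 2 ^ n ≤ ν, ‖a ν‖ ^ 2 * (ν : ℝ) ^ r₁ := by ring
    _ ≤ 4 / (1 - q) * (q ^ n / 2 ^ n) * S := by gcongr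
end
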